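/- Stabilization of the double chain: let π be a template with n parameters and suppose m ≥ 0 satisfies V_{m+1} = V_m and J_{m+1} = J_m. Then V_{m+j} = V_m and J_{m+j} = J_m for every j ≥ 1. -/

import Mathlib

/-!
Once `V_{m+1} = V_m` and `J_{m+1} = J_m`, the Lie derivative sends each generator `𝓛⁽ʲ⁾(π[v])`
of `J_m` to the generator `𝓛⁽ʲ⁺¹⁾(π[v])` of `J_{m+1} = J_m`; as `𝓛` is a derivation, it then maps
all of `J_m` into itself. So `𝓛⁽ʲ⁾(π[v]) ∈ J_m` for every `v ∈ V_m` and every `j`, and since all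
elements of `J_m` vanish at `v₀`, every `v ∈ V_m` lies in all the `V_i`. Hence `V_i = V_m` for
`i ≥ m`, and then `J_i = J_m` because both ideals have the same generators up to order `m` and
`J_m` contains the higher ones.
-/

open MvPolynomial

/-- The Lie derivative of a polynomial along the polynomial vector field `F`. -/
noncomputable def lieDeriv {N : ℕ} (F : Fin N → MvPolynomial (Fin N) ℝ)
    (p : MvPolynomial (Fin N) ℝ) : MvPolynomial (Fin N) ℝ :=
  ∑ i, pderiv i p * F i

/-- The vector space `V_i` of parameters `v` such that all Lie derivatives of `π[v]`
up to order `i` vanish at `v₀`. -/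
def Vset {N n : ℕ} (F : Fin N → MvPolynomial (Fin N) ℝ) (v₀ : Fin N → ℝ)
    (π : (Fin n → ℝ) →ₗ[ℝ] MvPolynomial (Fin N) ℝ) (i : ℕ) : Set (Fin n → ℝ) :=
  {v | ∀ j ≤ i, eval v₀ ((lieDeriv F)^[j] (π v)) = 0}

/-- The ideal `J_i` generated by `⋃_{j=0}^{i} 𝓛⁽ʲ⁾(π[V_i])`. -/
noncomputable def Jideal {N n : ℕ} (F : Fin N → MvPolynomial (Fin N) ℝ)
    (v₀ : Fin N → ℝ) (π : (Fin n → ℝ) →ₗ[ℝ] MvPolynomial (Fin N) ℝ) (i : ℕ) :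
    Ideal (MvPolynomial (Fin N) ℝ) :=
  Ideal.span {q | ∃ j ≤ i, ∃ v ∈ Vset F v₀ π i, q = (lieDeriv F)^[j] (π v)}

section LieDerivative

variable {N : ℕ} (F : Fin N → MvPolynomial (Fin N) ℝ)

lemma lieDeriv_zero : lieDeriv F 0 = 0 := by
  simp [lieDeriv]

lemma lieDeriv_add (p q : MvPolynomial (Fin N) ℝ) :
    lieDeriv F (p + q) = lieDeriv F p + lieDeriv F q := by
  simp [lieDeriv, add_mul, Finset.sum_add_distrib]

lemma lieDeriv_mul (p q : MvPolynomial (Fin N) ℝ) :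
    lieDeriv F (p * q) = lieDeriv F p * q + p * lieDeriv F q := by
  simp only [lieDeriv, pderiv_mul, add_mul, Finset.sum_add_distrib,
    Finset.sum_mul, Finset.mul_sum]
  congr 1 <;> exact Finset.sum_congr rfl fun i _ => by ring

theorem lieDeriv_mem_span_of_forall_mem {S : Set (MvPolynomial (Fin N) ℝ)}
    (hS : ∀ s ∈ S, lieDeriv F s ∈ Ideal.span S) {p : MvPolynomial (Fin N) ℝ}
    (hp : p ∈ Ideal.span S) : lieDeriv F p ∈ Ideal.span S := by
  induction hp using Submodule.span_induction with
  | mem s hs => exact hS s hs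
  | zero => simp [lieDeriv_zero]
  | add x y _ _ hx hy => rw [lieDeriv_add]; exact Ideal.add_mem _ hx hy
  | smul a x hx hDx =>
    rw [smul_eq_mul, lieDeriv_mul]
    exact Ideal.add_mem _ (Ideal.mul_mem_left _ _ hx) (Ideal.mul_mem_left _ _ hDx)

end LieDerivative

section DoubleChain

variable {N n : ℕ} (F : Fin N → MvPolynomial (Fin N) ℝ) (v₀ : Fin N → ℝ)
  (π : (Fin n → ℝ) →ₗ[ℝ] MvPolynomial (Fin N) ℝ)

lemma Vset_anti {i k : ℕ} (hik : i ≤ k) : Vset F v₀ π k ⊆ Vset F v₀ π i :=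
  fun _ hv j hj => hv j (hj.trans hik)

lemma iterate_lieDeriv_mem_Jideal {i j : ℕ} (hj : j ≤ i) {v : Fin n → ℝ}
    (hv : v ∈ Vset F v₀ π i) : (lieDeriv F)^[j] (π v) ∈ Jideal F v₀ π i :=
  Ideal.subset_span ⟨j, hj, v, hv, rfl⟩

lemma eval_eq_zero_of_mem_Jideal {i : ℕ} {p : MvPolynomial (Fin N) ℝ}
    (hp : p ∈ Jideal F v₀ π i) : eval v₀ p = 0 := by
  suffices Jideal F v₀ π i ≤ RingHom.ker (eval v₀) from this hp
  rw [Jideal, Ideal.span_le]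
  rintro _ ⟨j, hj, v, hv, rfl⟩
  exact hv j hj

lemma Jideal_mono {i k : ℕ} (hik : i ≤ k) (hV : Vset F v₀ π i ⊆ Vset F v₀ π k) :
    Jideal F v₀ π i ≤ Jideal F v₀ π k := by
  rw [Jideal, Ideal.span_le]
  rintro _ ⟨j, hj, v, hv, rfl⟩
  exact iterate_lieDeriv_mem_Jideal F v₀ π (hj.trans hik) (hV hv)

variable {F v₀ π} {m : ℕ}

theorem lieDeriv_mem_Jideal_of_stable (hV : Vset F v₀ π m ⊆ Vset F v₀ π (m + 1))
    (hJ : Jideal F v₀ π (m + 1) ≤ Jideal F v₀ π m) {p : MvPolynomial (Fin N) ℝ}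
    (hp : p ∈ Jideal F v₀ π m) : lieDeriv F p ∈ Jideal F v₀ π m := by
  refine lieDeriv_mem_span_of_forall_mem F ?_ hp
  rintro _ ⟨j, hj, v, hv, rfl⟩
  rw [← Function.iterate_succ_apply' (lieDeriv F)]
  exact hJ (iterate_lieDeriv_mem_Jideal F v₀ π (Nat.succ_le_succ hj) (hV hv))

theorem iterate_lieDeriv_mem_Jideal_of_stable (hV : Vset F v₀ π m ⊆ Vset F v₀ π (m + 1))
    (hJ : Jideal F v₀ π (m + 1) ≤ Jideal F v₀ π m) {v : Fin n → ℝ}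
    (hv : v ∈ Vset F v₀ π m) (j : ℕ) : (lieDeriv F)^[j] (π v) ∈ Jideal F v₀ π m := by
  induction j with
  | zero => exact iterate_lieDeriv_mem_Jideal F v₀ π (Nat.zero_le m) hv
  | succ j ih =>
    rw [Function.iterate_succ_apply']
    exact lieDeriv_mem_Jideal_of_stable hV hJ ih

theorem Vset_eq_of_stable (hV : Vset F v₀ π m ⊆ Vset F v₀ π (m + 1))
    (hJ : Jideal F v₀ π (m + 1) ≤ Jideal F v₀ π m) {i : ℕ} (hi : m ≤ i) :
    Vset F v₀ π i = Vset F v₀ π m :=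
  (Vset_anti F v₀ π hi).antisymm fun _ hv j _ =>
    eval_eq_zero_of_mem_Jideal F v₀ π (iterate_lieDeriv_mem_Jideal_of_stable hV hJ hv j)

theorem Jideal_eq_of_stable (hV : Vset F v₀ π m ⊆ Vset F v₀ π (m + 1))
    (hJ : Jideal F v₀ π (m + 1) ≤ Jideal F v₀ π m) {i : ℕ} (hi : m ≤ i) :
    Jideal F v₀ π i = Jideal F v₀ π m := by
  have hVi := Vset_eq_of_stable hV hJ hi
  refine le_antisymm ?_ (Jideal_mono F v₀ π hi hVi.ge)
  rw [Jideal, Ideal.span_le]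
  rintro _ ⟨j, -, v, hv, rfl⟩
  exact iterate_lieDeriv_mem_Jideal_of_stable hV hJ (hVi ▸ hv) j

end DoubleChain

theorem stmt9_general
    (N n : ℕ)
    (F : Fin N → MvPolynomial (Fin N) ℝ) (v₀ : Fin N → ℝ)
    (π : (Fin n → ℝ) →ₗ[ℝ] MvPolynomial (Fin N) ℝ) (m : ℕ)
    (hV : Vset F v₀ π (m + 1) = Vset F v₀ π m)
    (hJ : Jideal F v₀ π (m + 1) = Jideal F v₀ π m) :
    ∀ j : ℕ, 1 ≤ j →
      Vset F v₀ π (m + j) = Vset F v₀ π m ∧ Jideal F v₀ π (m + j) = Jideal F v₀ π m :=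
  fun j _ => ⟨Vset_eq_of_stable hV.ge hJ.le (Nat.le_add_right m j),
    Jideal_eq_of_stable hV.ge hJ.le (Nat.le_add_right m j)⟩

/-- stabilization of the double chain: if `V_{m+1} = V_m` and
`J_{m+1} = J_m`, then `V_{m+j} = V_m` and `J_{m+j} = J_m` for every `j ≥ 1`. -/
theorem stmt9
    (N n : ℕ) (hN : 1 ≤ N)
    (F : Fin N → MvPolynomial (Fin N) ℝ) (v₀ : Fin N → ℝ)
    (π : (Fin n → ℝ) →ₗ[ℝ] MvPolynomial (Fin N) ℝ) (m : ℕ)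
    (hV : Vset F v₀ π (m + 1) = Vset F v₀ π m)
    (hJ : Jideal F v₀ π (m + 1) = Jideal F v₀ π m) :
    ∀ j : ℕ, 1 ≤ j →
      Vset F v₀ π (m + j) = Vset F v₀ π m ∧ Jideal F v₀ π (m + j) = Jideal F v₀ π m :=
  stmt9_general N n F v₀ π m hV hJ
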